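/- Let M be a measurement assemblage in dimension d with m settings and o outcomes and let p be a weighting. Then IF⋄(M,p) ≥ C⋄(M,p) ≥ I⋄(M,p), i.e., the informativeness dominates the coherence, which dominates the incompatibility. -/

import Mathlib

open Matrix Kronecker BigOperators ComplexOrder

noncomputable section

def IsDensityMatrix {n : Type*} [Fintype n] [DecidableEq n] (ρ : Matrix n n ℂ) : Prop :=
  ρ.PosSemidef ∧ ρ.trace = 1

noncomputable def traceNorm {n : Type*} [Fintype n] [DecidableEq n] (X : Matrix n n ℂ) : ℝ :=
  (((Matrix.posSemidef_conjTranspose_mul_self X).1.eigenvectorUnitary : Matrix n n ℂ) *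
    diagonal ((fun r : ℝ => (r : ℂ)) ∘ Real.sqrt ∘ (Matrix.posSemidef_conjTranspose_mul_self X).1.eigenvalues) *
    (star (Matrix.posSemidef_conjTranspose_mul_self X).1.eigenvectorUnitary : Matrix n n ℂ)).trace.re

noncomputable def specNorm {n : Type*} [Fintype n] [DecidableEq n] (X : Matrix n n ℂ) : ℝ :=
  ‖Matrix.toEuclideanCLM (𝕜 := ℂ) X‖

def ptrace1 {n e : Type*} [Fintype n] (ρ : Matrix (n × e) (n × e) ℂ) : Matrix e e ℂ :=
  Matrix.of fun j j' => ∑ i, ρ (i, j) (i, j')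

def IsAssemblage {d m o : ℕ} (M : Fin m → Fin o → Matrix (Fin d) (Fin d) ℂ) : Prop :=
  (∀ x a, (M x a).PosSemidef) ∧ ∀ x, ∑ a, M x a = 1

def IsWeighting {m : ℕ} (p : Fin m → ℝ) : Prop :=
  (∀ x, 0 < p x) ∧ ∑ x, p x = 1

noncomputable def Ddiamond {d m o : ℕ} (p : Fin m → ℝ)
    (M N : Fin m → Fin o → Matrix (Fin d) (Fin d) ℂ) : ℝ :=
  (1 / 2) * ∑ x, p x *
    ⨆ ρ : {ρ : Matrix (Fin d × Fin d) (Fin d × Fin d) ℂ // IsDensityMatrix ρ},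
      ∑ a, traceNorm (ptrace1 (((M x a - N x a) ⊗ₖ (1 : Matrix (Fin d) (Fin d) ℂ)) * ρ.1))

def JointlyMeasurable {d m o : ℕ} (F : Fin m → Fin o → Matrix (Fin d) (Fin d) ℂ) : Prop :=
  ∃ G : (Fin m → Fin o) → Matrix (Fin d) (Fin d) ℂ,
    (∀ lam, (G lam).PosSemidef) ∧ (∑ lam, G lam = 1) ∧
    ∀ x a, F x a = ∑ lam ∈ Finset.univ.filter (fun lam => lam x = a), G lam

noncomputable def Incomp {d m o : ℕ} (p : Fin m → ℝ)
    (M : Fin m → Fin o → Matrix (Fin d) (Fin d) ℂ) : ℝ :=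
  ⨅ F : {F : Fin m → Fin o → Matrix (Fin d) (Fin d) ℂ // IsAssemblage F ∧ JointlyMeasurable F},
    Ddiamond p M F.1


def IsUninformative {d m o : ℕ} (F : Fin m → Fin o → Matrix (Fin d) (Fin d) ℂ) : Prop :=
  ∃ q : Fin m → Fin o → ℝ, (∀ x a, 0 ≤ q x a) ∧ (∀ x, ∑ a, q x a = 1) ∧
    ∀ x a, F x a = q x a • (1 : Matrix (Fin d) (Fin d) ℂ)

def IsIncoherent {d m o : ℕ} (F : Fin m → Fin o → Matrix (Fin d) (Fin d) ℂ) : Prop :=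
  ∀ x a, (F x a).IsDiag

noncomputable def Informativeness {d m o : ℕ} (p : Fin m → ℝ)
    (M : Fin m → Fin o → Matrix (Fin d) (Fin d) ℂ) : ℝ :=
  ⨅ F : {F : Fin m → Fin o → Matrix (Fin d) (Fin d) ℂ // IsAssemblage F ∧ IsUninformative F},
    Ddiamond p M F.1

noncomputable def Coherence {d m o : ℕ} (p : Fin m → ℝ)
    (M : Fin m → Fin o → Matrix (Fin d) (Fin d) ℂ) : ℝ :=
  ⨅ F : {F : Fin m → Fin o → Matrix (Fin d) (Fin d) ℂ // IsAssemblage F ∧ IsIncoherent F},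
    Ddiamond p M F.1

/-!
The three resource measures are infima of the same distance `D⋄(M, ·)` over nested sets of
assemblages: uninformative ⊆ incoherent ⊆ jointly measurable. A scalar POVM is diagonal, and a
diagonal POVM is a family of classical conditional distributions `a ↦ F x a i i`, which is
jointly measurable with the product distribution `λ ↦ ∏ y, F y (λ y) i i` as parent.
-/

lemma Finset.sum_filter_apply_eq_prod_of_sum_eq_one {ι κ R : Type*} [Fintype ι] [DecidableEq ι]
    [Fintype κ] [DecidableEq κ] [CommSemiring R] {g : ι → κ → R} (hg : ∀ y, ∑ b, g y b = 1)
    (x : ι) (a : κ) :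
    ∑ lam ∈ univ.filter (fun lam : ι → κ => lam x = a), ∏ y, g y (lam y) = g x a := by
  have hfilter : univ.filter (fun lam : ι → κ => lam x = a) =
      Fintype.piFinset fun y => if y = x then {a} else univ := by
    ext lam
    simp only [mem_filter, mem_univ, true_and, Fintype.mem_piFinset]
    refine ⟨fun h y => ?_, fun h => by simpa using h x⟩
    split_ifs with hy
    · simp [hy, h]
    · exact mem_univ _
  rw [hfilter, ← prod_univ_sum, Fintype.prod_eq_single x fun y hy => by simp [hy, hg]]
  simp

lemma Matrix.diagonal_finset_sum {ι n α : Type*} [DecidableEq n] [AddCommMonoid α] (s : Finset ι)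
    (f : ι → n → α) : Matrix.diagonal (∑ i ∈ s, f i) = ∑ i ∈ s, Matrix.diagonal (f i) :=
  map_sum (Matrix.diagonalAddMonoidHom n α) f s

lemma traceNorm_nonneg {n : Type*} [Fintype n] [DecidableEq n] (X : Matrix n n ℂ) :
    0 ≤ traceNorm X := by
  have hU := (Matrix.posSemidef_conjTranspose_mul_self X).1
  have hD : (diagonal ((fun r : ℝ => (r : ℂ)) ∘ Real.sqrt ∘ hU.eigenvalues)).PosSemidef :=
    posSemidef_diagonal_iff.mpr fun i => Complex.zero_le_real.mpr (Real.sqrt_nonneg _)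
  exact (Complex.nonneg_iff.mp
    (hD.mul_mul_conjTranspose_same (hU.eigenvectorUnitary : Matrix n n ℂ)).trace_nonneg).1

lemma Ddiamond_nonneg {d m o : ℕ} {p : Fin m → ℝ} (hp : ∀ x, 0 ≤ p x)
    (M N : Fin m → Fin o → Matrix (Fin d) (Fin d) ℂ) : 0 ≤ Ddiamond p M N :=
  mul_nonneg (by norm_num) <| Finset.sum_nonneg fun x _ => mul_nonneg (hp x) <|
    Real.iSup_nonneg fun _ => Finset.sum_nonneg fun _ _ => traceNorm_nonneg _

lemma Ddiamond_eq_zero_of_no_outcomes {d m : ℕ} (p : Fin m → ℝ)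
    (M N : Fin m → Fin 0 → Matrix (Fin d) (Fin d) ℂ) : Ddiamond p M N = 0 := by
  simp [Ddiamond]

def uniformAssemblage (d m o : ℕ) : Fin m → Fin o → Matrix (Fin d) (Fin d) ℂ :=
  fun _ _ => (o : ℝ)⁻¹ • 1

lemma isUninformative_uniformAssemblage {d m o : ℕ} (ho : 0 < o) :
    IsUninformative (uniformAssemblage d m o) :=
  ⟨fun _ _ => (o : ℝ)⁻¹, fun _ _ => by positivity,
    fun _ => by simp [Finset.sum_const, ho.ne'], fun _ _ => rfl⟩

lemma IsUninformative.isAssemblage {d m o : ℕ} {F : Fin m → Fin o → Matrix (Fin d) (Fin d) ℂ}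
    (hF : IsUninformative F) : IsAssemblage F := by
  obtain ⟨q, hq, hq1, hFq⟩ := hF
  obtain rfl : F = fun x a => q x a • 1 := funext₂ hFq
  refine ⟨fun x a => ?_, fun x => by rw [← Finset.sum_smul, hq1, one_smul]⟩
  exact PosSemidef.one.smul (hq x a)

lemma IsUninformative.isIncoherent {d m o : ℕ} {F : Fin m → Fin o → Matrix (Fin d) (Fin d) ℂ}
    (hF : IsUninformative F) : IsIncoherent F := by
  obtain ⟨q, -, -, hFq⟩ := hF
  exact fun x a => hFq x a ▸ isDiag_one.smul _

lemma IsIncoherent.jointlyMeasurable {d m o : ℕ} {F : Fin m → Fin o → Matrix (Fin d) (Fin d) ℂ}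
    (hF : IsAssemblage F) (hI : IsIncoherent F) : JointlyMeasurable F := by
  have hsum : ∀ y i, ∑ b, F y b i i = 1 := fun y i => by
    simpa [Matrix.sum_apply] using congr_fun₂ (hF.2 y) i i
  refine ⟨fun lam => diagonal fun i => ∏ y, F y (lam y) i i, fun lam => ?_, ?_, fun x a => ?_⟩
  · exact posSemidef_diagonal_iff.mpr fun i =>
      Finset.prod_nonneg fun y _ => (hF.1 y (lam y)).diag_nonneg
  · rw [← diagonal_finset_sum, ← diagonal_one]
    congr 1
    ext i
    rw [Finset.sum_apply, ← Fintype.prod_sum fun y b => F y b i i]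
    simp [hsum]
  · rw [← diagonal_finset_sum, ← (hI x a).diagonal_diag]
    congr 1
    ext i
    simp [Finset.sum_filter_apply_eq_prod_of_sum_eq_one (hsum · i)]

theorem informativeness_ge_coherence_ge_incompatibility_general {d m o : ℕ}
    (M : Fin m → Fin o → Matrix (Fin d) (Fin d) ℂ)
    (p : Fin m → ℝ) (hp : IsWeighting p) :
    Coherence p M ≤ Informativeness p M ∧ Incomp p M ≤ Coherence p M := by
  -- Without outcomes every distance vanishes, so all three infima are `0`, whether or not their
  -- index sets are empty (where `⨅` in `ℝ` is `0` by convention).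
  rcases Nat.eq_zero_or_pos o with rfl | ho
  · simp [Informativeness, Coherence, Incomp, Ddiamond_eq_zero_of_no_outcomes]
  have hbdd (P : (Fin m → Fin o → Matrix (Fin d) (Fin d) ℂ) → Prop) :
      BddBelow (Set.range fun F : {F // P F} => Ddiamond p M F.1) :=
    ⟨0, by rintro _ ⟨F, rfl⟩; exact Ddiamond_nonneg (fun x => (hp.1 x).le) M F⟩
  have hU := isUninformative_uniformAssemblage (d := d) (m := m) ho
  have : Nonempty {F // IsAssemblage F ∧ IsUninformative F} := ⟨⟨_, hU.isAssemblage, hU⟩⟩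
  have : Nonempty {F // IsAssemblage F ∧ IsIncoherent F} :=
    ⟨⟨_, hU.isAssemblage, hU.isIncoherent⟩⟩
  constructor
  · exact ciInf_mono_of_forall_exists (hbdd _)
      fun F => ⟨⟨F.1, F.2.1, F.2.2.isIncoherent⟩, le_rfl⟩
  · exact ciInf_mono_of_forall_exists (hbdd _)
      fun F => ⟨⟨F.1, F.2.1, F.2.2.jointlyMeasurable F.2.1⟩, le_rfl⟩

/-- Hierarchy of measurement resources: the informativeness dominates the coherence,
which dominates the incompatibility. -/
theorem informativeness_ge_coherence_ge_incompatibility {d m o : ℕ}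
    (M : Fin m → Fin o → Matrix (Fin d) (Fin d) ℂ) (hM : IsAssemblage M)
    (p : Fin m → ℝ) (hp : IsWeighting p) :
    Coherence p M ≤ Informativeness p M ∧ Incomp p M ≤ Coherence p M :=
  informativeness_ge_coherence_ge_incompatibility_general M p hp

end
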